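/- Let p be a prime and x, y, z ∈ ℚ_p. Set n = [[1,x,z,y],[0,1,y,0],[0,0,1,0],[0,0,−x,1]] and σ = s₁s₂s₁. Then σ·n ∈ P_K(ℚ_p)·B(p) if and only if v_p(z) < min{0, v_p(x), v_p(y)}. Moreover, in that case, whenever σ·n = q·γ with q ∈ P_K(ℚ_p) and γ ∈ B(p), one has m₁(q) ∈ z⁻¹·ℤ_p^× and m₂(q) ∈ [[−1 + xy/z, −y²/z],[−x²/z, 1 + xy/z]]·Γ₀(p). -/

import Mathlib

open Matrix

/-- The standard symplectic similitude matrix `J`. -/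
noncomputable def J4 (p : ℕ) [Fact p.Prime] : Matrix (Fin 4) (Fin 4) ℚ_[p] :=
  !![0, 0, 1, 0; 0, 0, 0, 1; -1, 0, 0, 0; 0, -1, 0, 0]

/-- `GSp₄(ℚ_p)`: invertible 4×4 matrices `g` with `gᵀ·J·g = μ·J` for some `μ ≠ 0`. -/
def GSp4 (p : ℕ) [Fact p.Prime] : Set (Matrix (Fin 4) (Fin 4) ℚ_[p]) :=
  {g | g.det ≠ 0 ∧ ∃ μ : ℚ_[p], μ ≠ 0 ∧ gᵀ * J4 p * g = μ • J4 p}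

/-- The congruence subgroup `B(p)` of `GSp₄(ℤ_p)`: all entries in `ℤ_p`, similitude factor a
unit, and the entries at positions (2,1), (3,1), (4,1), (3,2), (4,2), (3,4) in `pℤ_p`. -/
def Bp (p : ℕ) [Fact p.Prime] : Set (Matrix (Fin 4) (Fin 4) ℚ_[p]) :=
  {g | (∀ i j, ‖g i j‖ ≤ 1) ∧ (∃ μ : ℚ_[p], ‖μ‖ = 1 ∧ gᵀ * J4 p * g = μ • J4 p) ∧
    ‖g 1 0‖ ≤ (p : ℝ)⁻¹ ∧ ‖g 2 0‖ ≤ (p : ℝ)⁻¹ ∧ ‖g 3 0‖ ≤ (p : ℝ)⁻¹ ∧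
    ‖g 2 1‖ ≤ (p : ℝ)⁻¹ ∧ ‖g 3 1‖ ≤ (p : ℝ)⁻¹ ∧ ‖g 2 3‖ ≤ (p : ℝ)⁻¹}

/-- The Klingen parabolic `P_K(ℚ_p)`: entries at positions (2,1), (3,1), (4,1), (3,2),
(3,4) vanish. -/
def PK (p : ℕ) [Fact p.Prime] : Set (Matrix (Fin 4) (Fin 4) ℚ_[p]) :=
  {g | g ∈ GSp4 p ∧ g 1 0 = 0 ∧ g 2 0 = 0 ∧ g 3 0 = 0 ∧ g 2 1 = 0 ∧ g 2 3 = 0}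

/-- The `GL₂`-block `m₂(q)` of an element of the Klingen parabolic. -/
def m2K (p : ℕ) [Fact p.Prime] (q : Matrix (Fin 4) (Fin 4) ℚ_[p]) :
    Matrix (Fin 2) (Fin 2) ℚ_[p] :=
  !![q 1 1, q 1 3; q 3 1, q 3 3]

/-- `Γ₀(p) = {γ ∈ GL₂(ℤ_p) : γ₂₁ ∈ pℤ_p}`. -/
def Gamma0 (p : ℕ) [Fact p.Prime] : Set (Matrix (Fin 2) (Fin 2) ℚ_[p]) :=
  {γ | (∀ i j, ‖γ i j‖ ≤ 1) ∧ ‖γ.det‖ = 1 ∧ ‖γ 1 0‖ ≤ (p : ℝ)⁻¹}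

/-- The Weyl element `s₁`. -/
noncomputable def s1 (p : ℕ) [Fact p.Prime] : Matrix (Fin 4) (Fin 4) ℚ_[p] :=
  !![0, 1, 0, 0; 1, 0, 0, 0; 0, 0, 0, 1; 0, 0, 1, 0]

/-- The Weyl element `s₂`. -/
noncomputable def s2 (p : ℕ) [Fact p.Prime] : Matrix (Fin 4) (Fin 4) ℚ_[p] :=
  !![1, 0, 0, 0; 0, 0, 0, 1; 0, 0, 1, 0; 0, -1, 0, 0]

/-- The unipotent matrix `n` attached to `(x, y, z)` (Klingen setting). -/
noncomputable def nK (p : ℕ) [Fact p.Prime] (x y z : ℚ_[p]) : Matrix (Fin 4) (Fin 4) ℚ_[p] :=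
  !![1, x, z, y; 0, 1, y, 0; 0, 0, 1, 0; 0, 0, -x, 1]


/-!
Indices are 0-based, as in Lean. Write `σn = qγ`. Since the third row of `q ∈ P_K` is
`(0, 0, q₂₂, 0)`, the third row of `γ` is proportional to that of `σn`, i.e. to `(1, x, z, y)`.
In `B(p)` the entry `γ₂₂` is a unit while `γ₂₀, γ₂₁, γ₂₃ ∈ pℤ_p`, which is exactly the valuation
condition; conversely, under that condition `σn` factors explicitly.
As `σn` is symplectic, the similitude factors of `q` and `γ` are mutually inverse units; this gives
`m₁(q) = μ(q) / q₂₂ ∈ z⁻¹ℤ_p^×`. Finally `q = σn γ⁻¹`, where `γ⁻¹ = μ⁻¹ (-J γᵀ J)`, expresses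
`m₂(q)` as the given matrix times an explicit element of `Γ₀(p)`.
-/

lemma IsUltrametricDist.norm_sub_le_of_le {S : Type*} [SeminormedAddGroup S]
    [IsUltrametricDist S] {a b : S} {r : ℝ} (ha : ‖a‖ ≤ r) (hb : ‖b‖ ≤ r) : ‖a - b‖ ≤ r := by
  rw [sub_eq_add_neg]
  exact (IsUltrametricDist.norm_add_le_max _ _).trans (max_le ha ((norm_neg b).trans_le hb))

lemma norm_mul_le_of_le_of_norm_le_one {R : Type*} [SeminormedRing R] [NormMulClass R]
    {a b : R} {r : ℝ} (ha : ‖a‖ ≤ r) (hb : ‖b‖ ≤ 1) : ‖a * b‖ ≤ r := by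
  rw [norm_mul]
  exact (mul_le_of_le_one_right (norm_nonneg a) hb).trans ha

section Padic
variable {p : ℕ} [Fact p.Prime]

lemma inv_prime_lt_one : (p : ℝ)⁻¹ < 1 :=
  inv_lt_one_of_one_lt₀ (mod_cast (Fact.out : p.Prime).one_lt)

lemma Padic.norm_le_inv_of_norm_lt_one {w : ℚ_[p]} (h : ‖w‖ < 1) : ‖w‖ ≤ (p : ℝ)⁻¹ := by
  simpa using (Padic.norm_lt_pow_iff_norm_le_pow_sub_one w 0).mp (by simpa using h)

lemma Padic.addValuation_lt_addValuation_iff (a b : ℚ_[p]) :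
    Padic.addValuation b < Padic.addValuation a ↔ ‖a‖ < ‖b‖ := by
  have h1p : (1 : ℝ) < p := mod_cast (Fact.out : p.Prime).one_lt
  rcases eq_or_ne b 0 with rfl | hb
  · simp
  rcases eq_or_ne a 0 with rfl | ha
  · simp [Padic.addValuation.apply hb, hb]
  rw [Padic.norm_eq_zpow_neg_valuation ha, Padic.norm_eq_zpow_neg_valuation hb,
    Padic.addValuation.apply ha, Padic.addValuation.apply hb, WithTop.coe_lt_coe,
    (zpow_right_strictMono₀ h1p).lt_iff_lt, neg_lt_neg_iff]

lemma Padic.addValuation_lt_min_iff {x y z : ℚ_[p]} :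
    Padic.addValuation z < min 0 (min (Padic.addValuation x) (Padic.addValuation y)) ↔
      1 < ‖z‖ ∧ ‖x‖ < ‖z‖ ∧ ‖y‖ < ‖z‖ := by
  rw [← (Padic.addValuation (p := p)).map_one, lt_min_iff, lt_min_iff,
    addValuation_lt_addValuation_iff, addValuation_lt_addValuation_iff,
    addValuation_lt_addValuation_iff, norm_one]

end Padic

section Symplectic
variable {p : ℕ} [Fact p.Prime]

lemma transpose_mul_J4_mul_apply (g : Matrix (Fin 4) (Fin 4) ℚ_[p]) (i j : Fin 4) :
    (gᵀ * J4 p * g) i j = g 0 i * g 2 j + g 1 i * g 3 j - g 2 i * g 0 j - g 3 i * g 1 j := by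
  simp [J4, Matrix.mul_apply, Fin.sum_univ_four]
  ring

lemma J4_mul_J4 : J4 p * J4 p = -1 := by
  ext i j
  fin_cases i <;> fin_cases j <;> simp [J4, Matrix.mul_apply, Fin.sum_univ_four]

lemma similitude_mul_similitude_eq_one {q γ : Matrix (Fin 4) (Fin 4) ℚ_[p]} {a b : ℚ_[p]}
    (hq : qᵀ * J4 p * q = a • J4 p) (hγ : γᵀ * J4 p * γ = b • J4 p)
    (h : (q * γ)ᵀ * J4 p * (q * γ) = J4 p) : a * b = 1 := by
  have hJ : (a * b) • J4 p = J4 p :=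
    calc (a * b) • J4 p = γᵀ * (qᵀ * J4 p * q) * γ := by
          rw [hq, Matrix.mul_smul, Matrix.smul_mul, hγ, smul_smul]
      _ = (q * γ)ᵀ * J4 p * (q * γ) := by rw [transpose_mul]; simp only [Matrix.mul_assoc]
      _ = J4 p := h
  simpa [J4] using congrFun₂ hJ 0 2

noncomputable def sympAdj (γ : Matrix (Fin 4) (Fin 4) ℚ_[p]) : Matrix (Fin 4) (Fin 4) ℚ_[p] :=
  !![γ 2 2, γ 3 2, -γ 0 2, -γ 1 2;
     γ 2 3, γ 3 3, -γ 0 3, -γ 1 3;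
     -γ 2 0, -γ 3 0, γ 0 0, γ 1 0;
     -γ 2 1, -γ 3 1, γ 0 1, γ 1 1]

lemma sympAdj_eq (γ : Matrix (Fin 4) (Fin 4) ℚ_[p]) : sympAdj γ = -(J4 p * γᵀ * J4 p) := by
  ext i j
  simp only [Matrix.neg_apply, Matrix.mul_apply, Fin.sum_univ_four, Matrix.transpose_apply]
  fin_cases i <;> fin_cases j <;> simp [sympAdj, J4]

lemma sympAdj_mul {γ : Matrix (Fin 4) (Fin 4) ℚ_[p]} {μ : ℚ_[p]}
    (h : γᵀ * J4 p * γ = μ • J4 p) : sympAdj γ * γ = μ • 1 := by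
  rw [sympAdj_eq, Matrix.neg_mul, Matrix.mul_assoc, Matrix.mul_assoc, ← Matrix.mul_assoc γᵀ, h,
    Matrix.mul_smul, J4_mul_J4, smul_neg, neg_neg]

lemma eq_smul_mul_sympAdj {M q γ : Matrix (Fin 4) (Fin 4) ℚ_[p]} {μ : ℚ_[p]} (hμ : μ ≠ 0)
    (hsym : γᵀ * J4 p * γ = μ • J4 p) (h : M = q * γ) : q = μ⁻¹ • (M * sympAdj γ) := by
  have hinv : γ * (μ⁻¹ • sympAdj γ) = 1 := by
    rw [mul_eq_one_comm, Matrix.smul_mul, sympAdj_mul hsym, smul_smul, inv_mul_cancel₀ hμ,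
      one_smul]
  rw [← Matrix.mul_smul, h, Matrix.mul_assoc, hinv, Matrix.mul_one]

lemma mul_apply_two_of_mem_PK {q : Matrix (Fin 4) (Fin 4) ℚ_[p]} (hq : q ∈ PK p)
    (γ : Matrix (Fin 4) (Fin 4) ℚ_[p]) (j : Fin 4) : (q * γ) 2 j = q 2 2 * γ 2 j := by
  obtain ⟨-, -, h20, -, h21, h23⟩ := hq
  simp [Matrix.mul_apply, Fin.sum_univ_four, h20, h21, h23]

lemma det_m2K_of_mem_PK {q : Matrix (Fin 4) (Fin 4) ℚ_[p]} (hq : q ∈ PK p) {a : ℚ_[p]}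
    (hsym : qᵀ * J4 p * q = a • J4 p) : (m2K p q).det = a := by
  obtain ⟨-, -, -, -, h21, h23⟩ := hq
  have := congrFun₂ hsym 1 3
  rw [transpose_mul_J4_mul_apply] at this
  simp [J4, h21, h23] at this
  simp [m2K, Matrix.det_fin_two_of]
  linear_combination this

/-- The `(0, 2)` entry of `γᵀ J γ = μ J` reads `γ₀₀ γ₂₂ ≡ μ (mod p)`. -/
lemma Bp.norm_apply_two_two {γ : Matrix (Fin 4) (Fin 4) ℚ_[p]} (hγ : γ ∈ Bp p) :
    ‖γ 2 2‖ = 1 := by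
  obtain ⟨hint, ⟨μ, hμ, hsym⟩, h10, h20, h30, -, -, -⟩ := hγ
  have hμ_eq : γ 0 0 * γ 2 2 = μ - (γ 1 0 * γ 3 2 - γ 2 0 * γ 0 2 - γ 3 0 * γ 1 2) := by
    have := congrFun₂ hsym 0 2
    rw [transpose_mul_J4_mul_apply] at this
    simp [J4] at this
    linear_combination this
  have hsmall : ‖γ 1 0 * γ 3 2 - γ 2 0 * γ 0 2 - γ 3 0 * γ 1 2‖ < 1 :=
    (IsUltrametricDist.norm_sub_le_of_le (IsUltrametricDist.norm_sub_le_of_le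
      (norm_mul_le_of_le_of_norm_le_one h10 (hint 3 2))
      (norm_mul_le_of_le_of_norm_le_one h20 (hint 0 2)))
      (norm_mul_le_of_le_of_norm_le_one h30 (hint 1 2))).trans_lt inv_prime_lt_one
  have hprod : ‖γ 0 0‖ * ‖γ 2 2‖ = 1 := by
    rw [← norm_mul, hμ_eq, sub_eq_add_neg, IsUltrametricDist.norm_add_eq_max_of_norm_ne_norm,
      norm_neg, hμ, max_eq_left hsmall.le]
    rw [norm_neg, hμ]
    exact hsmall.ne'
  nlinarith [hint 0 0, hint 2 2, norm_nonneg (γ 0 0), norm_nonneg (γ 2 2)]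

end Symplectic

noncomputable def σnK (p : ℕ) [Fact p.Prime] (x y z : ℚ_[p]) : Matrix (Fin 4) (Fin 4) ℚ_[p] :=
  !![0, 0, 1, 0; 0, 1, y, 0; -1, -x, -z, -y; 0, 0, -x, 1]

section Necessity
variable {p : ℕ} [Fact p.Prime]

lemma s1_mul_s2_mul_s1_mul_nK (x y z : ℚ_[p]) :
    s1 p * s2 p * s1 p * nK p x y z = σnK p x y z := by
  ext i j
  fin_cases i <;> fin_cases j <;> simp [s1, s2, nK, σnK, Matrix.mul_apply, Fin.sum_univ_four]

lemma σnK_transpose_mul_J4_mul (x y z : ℚ_[p]) :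
    (σnK p x y z)ᵀ * J4 p * σnK p x y z = J4 p := by
  ext i j
  rw [transpose_mul_J4_mul_apply]
  fin_cases i <;> fin_cases j <;> simp [σnK, J4, mul_comm]

variable {x y z : ℚ_[p]} {q γ : Matrix (Fin 4) (Fin 4) ℚ_[p]}

lemma row_two_of_σnK_eq_mul (hq : q ∈ PK p) (h : σnK p x y z = q * γ) :
    q 2 2 * γ 2 0 = -1 ∧ γ 2 1 = γ 2 0 * x ∧ γ 2 2 = γ 2 0 * z ∧ γ 2 3 = γ 2 0 * y := by
  have row (j : Fin 4) : q 2 2 * γ 2 j = σnK p x y z 2 j := by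
    rw [h, mul_apply_two_of_mem_PK hq]
  have r0 : q 2 2 * γ 2 0 = -1 := by simpa [σnK] using row 0
  refine ⟨r0, ?_, ?_, ?_⟩
  · linear_combination γ 2 1 * r0 - γ 2 0 * (by simpa [σnK] using row 1 : q 2 2 * γ 2 1 = -x)
  · linear_combination γ 2 2 * r0 - γ 2 0 * (by simpa [σnK] using row 2 : q 2 2 * γ 2 2 = -z)
  · linear_combination γ 2 3 * r0 - γ 2 0 * (by simpa [σnK] using row 3 : q 2 2 * γ 2 3 = -y)

lemma norm_lt_of_σnK_eq_mul (hq : q ∈ PK p) (hγ : γ ∈ Bp p) (h : σnK p x y z = q * γ) :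
    1 < ‖z‖ ∧ ‖x‖ < ‖z‖ ∧ ‖y‖ < ‖z‖ := by
  obtain ⟨-, hx, hz, hy⟩ := row_two_of_σnK_eq_mul hq h
  have hz1 : ‖γ 2 0‖ * ‖z‖ = 1 := by rw [← norm_mul, ← hz, Bp.norm_apply_two_two hγ]
  obtain ⟨-, -, -, h20, -, h21, -, h23⟩ := hγ
  have hlt {w : ℚ_[p]} (hw : ‖γ 2 0 * w‖ ≤ (p : ℝ)⁻¹) : ‖w‖ < ‖z‖ := by
    rw [norm_mul] at hw
    exact lt_of_mul_lt_mul_left (hw.trans_lt (hz1 ▸ inv_prime_lt_one)) (norm_nonneg _)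
  refine ⟨?_, hlt (hx ▸ h21), hlt (hy ▸ h23)⟩
  nlinarith [h20.trans_lt inv_prime_lt_one, norm_nonneg (γ 2 0)]

lemma norm_similitude_eq_one_of_σnK_eq_mul {a : ℚ_[p]} (hsymq : qᵀ * J4 p * q = a • J4 p)
    (hγ : γ ∈ Bp p) (h : σnK p x y z = q * γ) : ‖a‖ = 1 := by
  obtain ⟨-, ⟨μ, hμ, hsym⟩, -⟩ := hγ
  have : ‖a‖ * ‖μ‖ = 1 := by
    rw [← norm_mul, similitude_mul_similitude_eq_one hsymq hsym
      (h ▸ σnK_transpose_mul_J4_mul x y z), norm_one]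
  simpa [hμ] using this

lemma exists_norm_eq_one_of_σnK_eq_mul (hq : q ∈ PK p) (hγ : γ ∈ Bp p)
    (h : σnK p x y z = q * γ) : ∃ u : ℚ_[p], ‖u‖ = 1 ∧ q 0 0 = z⁻¹ * u := by
  obtain ⟨hr0, -, hz, -⟩ := row_two_of_σnK_eq_mul hq h
  have h22 : ‖γ 2 2‖ = 1 := Bp.norm_apply_two_two hγ
  obtain ⟨⟨-, μq, -, hsymq⟩, h10, h20, h30, -, -⟩ := hq
  have hq00 : q 0 0 * q 2 2 = μq := by
    have := congrFun₂ hsymq 0 2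
    rw [transpose_mul_J4_mul_apply] at this
    simpa [J4, h10, h20, h30] using this
  refine ⟨-(μq * γ 2 2), ?_, ?_⟩
  · rw [norm_neg, norm_mul, h22, mul_one, norm_similitude_eq_one_of_σnK_eq_mul hsymq hγ h]
  · have hz0 : z ≠ 0 := by rintro rfl; simp_all
    rw [← hq00, hz]
    field_simp
    linear_combination q 0 0 * hr0

lemma m2K_eq_mul {μ : ℚ_[p]} (hμ : μ ≠ 0) (hq : q = μ⁻¹ • (σnK p x y z * sympAdj γ))
    (h21 : q 2 1 = 0) (h23 : q 2 3 = 0) (hz : z ≠ 0) :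
    m2K p q = !![-1 + x * y / z, -(y ^ 2) / z; -(x ^ 2) / z, 1 + x * y / z] *
      μ⁻¹ • !![y / z * γ 3 2 - γ 3 3, γ 1 3 - y / z * γ 1 2;
                x / z * γ 3 2 - γ 3 1, γ 1 1 - x / z * γ 1 2] := by
  subst hq
  simp [σnK, sympAdj, hμ] at h21 h23
  ext i j
  fin_cases i <;> fin_cases j <;> simp [m2K, σnK, sympAdj, Matrix.mul_apply] <;> field_simp
  · linear_combination (-y * z) * h21
  · linear_combination (-y * z) * h23
  · linear_combination x * z * h21
  · linear_combination x * z * h23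

lemma exists_mem_Gamma0_of_σnK_eq_mul (hq : q ∈ PK p) (hγ : γ ∈ Bp p)
    (h : σnK p x y z = q * γ) : ∃ γ' ∈ Gamma0 p,
      m2K p q = !![-1 + x * y / z, -(y ^ 2) / z; -(x ^ 2) / z, 1 + x * y / z] * γ' := by
  obtain ⟨-, hx, hz, hy⟩ := row_two_of_σnK_eq_mul hq h
  have h22 : ‖γ 2 2‖ = 1 := Bp.norm_apply_two_two hγ
  have hz0 : z ≠ 0 := by rintro rfl; simp_all
  have hdiv {w : ℚ_[p]} {j : Fin 4} (hw : γ 2 j = γ 2 0 * w) : ‖w / z‖ = ‖γ 2 j‖ := by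
    have h20 : γ 2 0 ≠ 0 := by rintro h0; simp_all
    rw [← mul_div_mul_left w z h20, ← hw, ← hz, norm_div, h22, div_one]
  obtain ⟨μq, -, hsymq⟩ := hq.1.2
  have hμq : ‖μq‖ = 1 := norm_similitude_eq_one_of_σnK_eq_mul hsymq hγ h
  have hdetq := det_m2K_of_mem_PK hq hsymq
  obtain ⟨-, -, -, -, hq21, hq23⟩ := hq
  obtain ⟨hint, ⟨μ, hμ, hsym⟩, -, -, -, h21, h31, h23⟩ := hγ
  have hxz : ‖x / z‖ ≤ (p : ℝ)⁻¹ := hdiv hx ▸ h21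
  have hyz : ‖y / z‖ ≤ (p : ℝ)⁻¹ := hdiv hy ▸ h23
  have hμ0 : μ ≠ 0 := norm_ne_zero_iff.mp (by simp [hμ])
  have hm2 := m2K_eq_mul hμ0 (eq_smul_mul_sympAdj hμ0 hsym h) hq21 hq23 hz0
  refine ⟨_, ⟨?_, ?_, ?_⟩, hm2⟩
  · have hxz1 := hxz.trans inv_prime_lt_one.le
    have hyz1 := hyz.trans inv_prime_lt_one.le
    intro i j
    fin_cases i <;> fin_cases j <;> simp [norm_mul, hμ]
    · exact IsUltrametricDist.norm_sub_le_of_le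
        (norm_mul_le_of_le_of_norm_le_one hyz1 (hint 3 2)) (hint 3 3)
    · exact IsUltrametricDist.norm_sub_le_of_le
        (hint 1 3) (norm_mul_le_of_le_of_norm_le_one hyz1 (hint 1 2))
    · exact IsUltrametricDist.norm_sub_le_of_le
        (norm_mul_le_of_le_of_norm_le_one hxz1 (hint 3 2)) (h31.trans inv_prime_lt_one.le)
    · exact IsUltrametricDist.norm_sub_le_of_le
        (hint 1 1) (norm_mul_le_of_le_of_norm_le_one hxz1 (hint 1 2))
  · have hdet := congrArg Matrix.det hm2
    rw [hdetq, Matrix.det_mul, Matrix.det_fin_two_of] at hdet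
    have hdetA : (-1 + x * y / z) * (1 + x * y / z) - -y ^ 2 / z * (-x ^ 2 / z) = -1 := by
      field_simp
      ring
    rw [hdetA, neg_one_mul] at hdet
    rw [← norm_neg, ← hdet, hμq]
  · simpa [norm_mul, hμ] using IsUltrametricDist.norm_sub_le_of_le
      (norm_mul_le_of_le_of_norm_le_one hxz (hint 3 2)) h31

end Necessity

noncomputable def factorPK (p : ℕ) [Fact p.Prime] (x y z : ℚ_[p]) :
    Matrix (Fin 4) (Fin 4) ℚ_[p] :=
  !![-z⁻¹, -(x / z), 1, -(y / z);
     0, 1 - x * y / z, y, -(y ^ 2 / z);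
     0, 0, -z, 0;
     0, x ^ 2 / z, -x, 1 + x * y / z]

noncomputable def factorBp (p : ℕ) [Fact p.Prime] (x y z : ℚ_[p]) :
    Matrix (Fin 4) (Fin 4) ℚ_[p] :=
  !![1, 0, 0, 0;
     -(y / z), 1, 0, 0;
     z⁻¹, x / z, 1, y / z;
     x / z, 0, 0, 1]

section Sufficiency
variable {p : ℕ} [Fact p.Prime] {x y z : ℚ_[p]}

lemma factorPK_mem_PK (hz : z ≠ 0) : factorPK p x y z ∈ PK p := by
  refine ⟨⟨?_, 1, one_ne_zero, ?_⟩, by simp [factorPK]⟩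
  · have hdet : (factorPK p x y z).det = 1 := by
      simp [factorPK, Matrix.det_succ_row_zero, Fin.sum_univ_succ]
      field_simp
      ring
    simp [hdet]
  · ext i j
    rw [transpose_mul_J4_mul_apply]
    fin_cases i <;> fin_cases j <;> simp [factorPK, J4] <;> field_simp <;> ring

lemma factorBp_mem_Bp (hz : ‖z⁻¹‖ ≤ (p : ℝ)⁻¹) (hx : ‖x / z‖ ≤ (p : ℝ)⁻¹)
    (hy : ‖y / z‖ ≤ (p : ℝ)⁻¹) : factorBp p x y z ∈ Bp p := by
  rw [norm_inv] at hz
  rw [norm_div] at hx hy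
  refine ⟨?_, ⟨1, norm_one, ?_⟩, by simp [factorBp, hx, hy, hz]⟩
  · have := inv_prime_lt_one (p := p)
    intro i j
    fin_cases i <;> fin_cases j <;> simp [factorBp] <;> linarith
  · ext i j
    rw [transpose_mul_J4_mul_apply]
    fin_cases i <;> fin_cases j <;> simp [factorBp, J4, mul_comm]

lemma σnK_eq_factorPK_mul_factorBp (hz : z ≠ 0) :
    σnK p x y z = factorPK p x y z * factorBp p x y z := by
  ext i j
  fin_cases i <;> fin_cases j <;>
    simp [σnK, factorPK, factorBp, Matrix.mul_apply, Fin.sum_univ_four] <;> field_simp <;> ring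

lemma exists_mem_PK_mem_Bp_of_norm_lt (hz : 1 < ‖z‖) (hx : ‖x‖ < ‖z‖) (hy : ‖y‖ < ‖z‖) :
    ∃ q ∈ PK p, ∃ γ ∈ Bp p, σnK p x y z = q * γ := by
  have hz0 : z ≠ 0 := norm_pos_iff.mp (one_pos.trans hz)
  have hdiv {w : ℚ_[p]} (hw : ‖w‖ < ‖z‖) : ‖w / z‖ ≤ (p : ℝ)⁻¹ :=
    Padic.norm_le_inv_of_norm_lt_one (by rwa [norm_div, div_lt_one (one_pos.trans hz)])
  refine ⟨_, factorPK_mem_PK hz0, _, factorBp_mem_Bp ?_ (hdiv hx) (hdiv hy),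
    σnK_eq_factorPK_mul_factorBp hz0⟩
  simpa using hdiv (w := 1) (by rwa [norm_one])

end Sufficiency

/-- `σ·n ∈ P_K(ℚ_p)·B(p)` iff `v_p(z) < min{0, v_p(x), v_p(y)}` (here
`σ = s₁s₂s₁` and `n` is the unipotent matrix attached to `(x,y,z)`); moreover in that case
any factorization `σ·n = q·γ` with `q ∈ P_K(ℚ_p)`, `γ ∈ B(p)` satisfies
`m₁(q) ∈ z⁻¹·ℤ_p^×` and `m₂(q) ∈ [[−1+xy/z, −y²/z],[−x²/z, 1+xy/z]]·Γ₀(p)`. -/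
theorem stmt_6 (p : ℕ) [Fact p.Prime] (x y z : ℚ_[p]) :
    ((∃ q ∈ PK p, ∃ γ ∈ Bp p, s1 p * s2 p * s1 p * nK p x y z = q * γ) ↔
      Padic.addValuation z <
        min 0 (min (Padic.addValuation x) (Padic.addValuation y))) ∧
    (∀ q γ : Matrix (Fin 4) (Fin 4) ℚ_[p], q ∈ PK p → γ ∈ Bp p →
      s1 p * s2 p * s1 p * nK p x y z = q * γ →
      (∃ u : ℚ_[p], ‖u‖ = 1 ∧ q 0 0 = z⁻¹ * u) ∧
      ∃ γ' ∈ Gamma0 p,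
        m2K p q = !![-1 + x * y / z, -(y ^ 2) / z; -(x ^ 2) / z, 1 + x * y / z] * γ') := by
  simp only [s1_mul_s2_mul_s1_mul_nK, Padic.addValuation_lt_min_iff]
  exact ⟨⟨fun ⟨q, hq, γ, hγ, h⟩ ↦ norm_lt_of_σnK_eq_mul hq hγ h,
      fun ⟨hz, hx, hy⟩ ↦ exists_mem_PK_mem_Bp_of_norm_lt hz hx hy⟩,
    fun q γ hq hγ h ↦
      ⟨exists_norm_eq_one_of_σnK_eq_mul hq hγ h, exists_mem_Gamma0_of_σnK_eq_mul hq hγ h⟩⟩
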